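/- arXiv:2306.16136 — 2 statements merged into one kernel-verified Lean document; each statement's English description precedes it below -/
import Mathlib

section
/- Let (A, ‖·‖) be a non-unital normed algebra with regular norm ‖·‖. If A (identified with A ⊕ {0}) is a closed subspace of the unitization (A_e, ‖·‖_op), then 0 ∈ closure(convexHull(V_A(a))) for every a ∈ A. -/
/-
If `0` is not in the closed convex hull of `V_A(a)`, a rotation `b = w • a` has `Re V_A(b) ≥ c > 0`.
Testing `x + t b x` against a norming functional of `x` gives `‖x + t b x‖ ≥ (1 + t c) ‖x‖`, and
since `(1 + t b)(1 - t b) = 1 - t² b²`, left multiplication by `1 - t b` is a strict contraction of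
`A` for small `t > 0`. Its powers `(1 - t b)^n ∈ 1 + A` then tend to `0` in `‖·‖_op`, so `1` lies
in the `‖·‖_op`-closure of `A`, which is impossible when `A` is closed.
-/

/-- The spatial numerical range of `a` in a normed algebra `A` with norm `q`:
`{φ(ax) : ‖x‖ = 1, ‖φ‖ = 1, φ(x) = 1}`. -/
def spatialNR {A : Type*} [NonUnitalNonAssocRing A] [Module ℂ A]
    (q : A → ℝ) (a : A) : Set ℂ :=
  {z | ∃ (x : A) (φ : A →ₗ[ℂ] ℂ),
    q x = 1 ∧ (∀ y : A, ‖φ y‖ ≤ q y) ∧ φ x = 1 ∧ φ (a * x) = z}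

/-- The operator norm on the unitization `A_e` induced by the norm of `A`:
`‖a + λ1‖_op = sup {‖ax + λx‖ : ‖x‖ ≤ 1}`. -/
noncomputable def opU {A : Type*} [NonUnitalNormedRing A] [NormedSpace ℂ A]
    [IsScalarTower ℂ A A] [SMulCommClass ℂ A A] (z : Unitization ℂ A) : ℝ :=
  sSup {r : ℝ | ∃ x : A, ‖x‖ ≤ 1 ∧ r = ‖z.snd * x + z.fst • x‖}

open ComplexConjugate
open scoped Pointwise

theorem exists_pos_le_re_mul_of_zero_notMem_closure_convexHull {S : Set ℂ}
    (h : (0 : ℂ) ∉ closure (convexHull ℝ S)) : ∃ w : ℂ, ∃ c > 0, ∀ z ∈ S, c ≤ (w * z).re := by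
  obtain ⟨f, u, hf0, hf⟩ := geometric_hahn_banach_point_closed
    (convex_convexHull ℝ S).closure isClosed_closure h
  refine ⟨conj ((InnerProductSpace.toDual ℝ ℂ).symm f), u, by simpa using hf0, fun z hz => ?_⟩
  have hfz := hf z (subset_closure (subset_convexHull ℝ S hz))
  rw [← InnerProductSpace.toDual_symm_apply, Complex.inner] at hfz
  rw [mul_comm]
  exact hfz.le

theorem spatialNR_smul {A : Type*} [NonUnitalNonAssocRing A] [Module ℂ A] [IsScalarTower ℂ A A]
    (q : A → ℝ) (w : ℂ) (a : A) : spatialNR q (w • a) = w • spatialNR q a := by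
  ext z
  simp only [spatialNR, Set.mem_smul_set, smul_mul_assoc, map_smul, smul_eq_mul]
  constructor
  · rintro ⟨x, φ, hx, hφ, hφx, rfl⟩
    exact ⟨φ (a * x), ⟨x, φ, hx, hφ, hφx, rfl⟩, rfl⟩
  · rintro ⟨_, ⟨x, φ, hx, hφ, hφx, rfl⟩, rfl⟩
    exact ⟨x, φ, hx, hφ, hφx, rfl⟩

section NormedAlgebra

variable {A : Type*} [NonUnitalNormedRing A] [NormedSpace ℂ A] [SMulCommClass ℂ A A]

theorem inv_norm_mul_mem_spatialNR {x : A} (hx : x ≠ 0) {g : StrongDual ℂ A} (hg : ‖g‖ = 1)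
    (hgx : g x = ‖x‖) (b : A) : (‖x‖ : ℂ)⁻¹ * g (b * x) ∈ spatialNR (‖·‖) b := by
  have hx' : (‖x‖ : ℂ) ≠ 0 := by simpa using hx
  refine ⟨(‖x‖ : ℂ)⁻¹ • x, g.toLinearMap, ?_, fun y => ?_, ?_, ?_⟩
  · simp [norm_smul, hx]
  · simpa [hg] using g.le_opNorm y
  · simp [hgx, hx']
  · simp [mul_smul_comm]

theorem mul_norm_le_norm_add_smul_mul {b : A} {c t : ℝ}
    (hb : ∀ z ∈ spatialNR (‖·‖) b, c ≤ z.re) (ht : 0 ≤ t) (x : A) :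
    (1 + t * c) * ‖x‖ ≤ ‖x + (t : ℂ) • (b * x)‖ := by
  rcases eq_or_ne x 0 with rfl | hx
  · simp
  obtain ⟨g, hg, hgx⟩ : ∃ g : StrongDual ℂ A, ‖g‖ = 1 ∧ g x = ‖x‖ :=
    exists_dual_vector ℂ x (norm_ne_zero_iff.mpr hx)
  set z := (‖x‖ : ℂ)⁻¹ * g (b * x)
  have hz : c ≤ z.re := hb z (inv_norm_mul_mem_spatialNR hx hg hgx b)
  have hgz : g (x + (t : ℂ) • (b * x)) = ‖x‖ * (1 + t * z) := by
    have hx' : (‖x‖ : ℂ) ≠ 0 := by simpa using hx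
    rw [map_add, map_smul, hgx, smul_eq_mul]
    simp only [z]
    field_simp
  calc (1 + t * c) * ‖x‖ ≤ (1 + t * z.re) * ‖x‖ := by gcongr
    _ = (g (x + (t : ℂ) • (b * x))).re := by rw [hgz]; simp [mul_comm]
    _ ≤ ‖g (x + (t : ℂ) • (b * x))‖ := Complex.re_le_norm _
    _ ≤ ‖x + (t : ℂ) • (b * x)‖ := (g.le_opNorm _).trans_eq (by rw [hg, one_mul])

theorem exists_norm_sub_smul_mul_le {b : A} {c : ℝ} (hc : 0 < c)
    (hb : ∀ z ∈ spatialNR (‖·‖) b, c ≤ z.re) :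
    ∃ t ρ : ℝ, 0 ≤ ρ ∧ ρ < 1 ∧ ∀ x : A, ‖x - (t : ℂ) • (b * x)‖ ≤ ρ * ‖x‖ := by
  set t := c / (‖b‖ ^ 2 + 1)
  have ht : 0 < t := by positivity
  have htb : t * ‖b‖ ^ 2 < c := by
    rw [div_mul_eq_mul_div, div_lt_iff₀ (by positivity)]
    nlinarith
  refine ⟨t, (1 + t ^ 2 * ‖b‖ ^ 2) / (1 + t * c), by positivity, ?_, fun x => ?_⟩
  · rw [div_lt_one (by positivity)]
    nlinarith
  have hfactor : (x - (t : ℂ) • (b * x)) + (t : ℂ) • (b * (x - (t : ℂ) • (b * x)))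
      = x - ((t : ℂ) ^ 2) • (b * (b * x)) := by
    rw [mul_sub, mul_smul_comm, smul_sub, smul_smul, sq]
    abel
  rw [div_mul_eq_mul_div, le_div_iff₀ (by positivity), mul_comm]
  calc (1 + t * c) * ‖x - (t : ℂ) • (b * x)‖ ≤ ‖x - ((t : ℂ) ^ 2) • (b * (b * x))‖ :=
        hfactor ▸ mul_norm_le_norm_add_smul_mul hb ht.le _
    _ ≤ ‖x‖ + ‖((t : ℂ) ^ 2) • (b * (b * x))‖ := norm_sub_le _ _
    _ ≤ ‖x‖ + t ^ 2 * (‖b‖ * (‖b‖ * ‖x‖)) := by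
        rw [norm_smul, norm_pow, Complex.norm_real, Real.norm_of_nonneg ht.le]
        gcongr
        exact (norm_mul_le _ _).trans (by gcongr; exact norm_mul_le _ _)
    _ = (1 + t ^ 2 * ‖b‖ ^ 2) * ‖x‖ := by ring

variable [IsScalarTower ℂ A A]

/-- The left regular representation of `A_e` on `A`; `opU` is its operator norm. -/
noncomputable def leftRegular : Unitization ℂ A →ₐ[ℂ] Module.End ℂ A :=
  Unitization.lift (NonUnitalAlgHom.lmul ℂ A)

theorem leftRegular_apply (z : Unitization ℂ A) (x : A) :
    leftRegular z x = z.snd * x + z.fst • x := by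
  simp [leftRegular, add_comm]

theorem norm_leftRegular_pow_le {z : Unitization ℂ A} {ρ : ℝ} (hρ : 0 ≤ ρ)
    (hz : ∀ x, ‖leftRegular z x‖ ≤ ρ * ‖x‖) (n : ℕ) (x : A) :
    ‖leftRegular (z ^ n) x‖ ≤ ρ ^ n * ‖x‖ := by
  induction n with
  | zero => simp
  | succ n ih =>
    calc ‖leftRegular (z ^ (n + 1)) x‖ = ‖leftRegular z (leftRegular (z ^ n) x)‖ := by
          rw [pow_succ', map_mul, Module.End.mul_apply]
      _ ≤ ρ * ‖leftRegular (z ^ n) x‖ := hz _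
      _ ≤ ρ * (ρ ^ n * ‖x‖) := by gcongr
      _ = ρ ^ (n + 1) * ‖x‖ := by ring

theorem opU_le {z : Unitization ℂ A} {ρ : ℝ} (hρ : 0 ≤ ρ)
    (hz : ∀ x, ‖leftRegular z x‖ ≤ ρ * ‖x‖) : opU z ≤ ρ := by
  refine Real.sSup_le ?_ hρ
  rintro _ ⟨x, hx, rfl⟩
  rw [← leftRegular_apply]
  exact (hz x).trans (mul_le_of_le_one_right hρ hx)

theorem exists_opU_one_sub_lt {z : Unitization ℂ A} (hz1 : z.fst = 1) {ρ : ℝ} (hρ0 : 0 ≤ ρ)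
    (hρ1 : ρ < 1) (hz : ∀ x, ‖leftRegular z x‖ ≤ ρ * ‖x‖) :
    ∀ ε > (0 : ℝ), ∃ a : A, opU (1 - (a : Unitization ℂ A)) < ε := by
  intro ε hε
  obtain ⟨n, hn⟩ := exists_pow_lt_of_lt_one hε hρ1
  have hfst : (z ^ n).fst = 1 := by
    simpa [hz1] using map_pow (Unitization.fstHom ℂ A) z n
  have hpow : 1 - ((-(z ^ n).snd : A) : Unitization ℂ A) = z ^ n := by
    ext <;> simp [hfst]
  refine ⟨-(z ^ n).snd, ?_⟩
  rw [hpow]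
  exact (opU_le (pow_nonneg hρ0 n) (norm_leftRegular_pow_le hρ0 hz n)).trans_lt hn

end NormedAlgebra

theorem zero_mem_numericalRange_of_closed_general
    (A : Type*) [NonUnitalNormedRing A] [NormedSpace ℂ A]
    [IsScalarTower ℂ A A] [SMulCommClass ℂ A A]
    (hclosed : ∀ z : Unitization ℂ A,
      (∀ ε > (0 : ℝ), ∃ a : A, opU (z - (a : Unitization ℂ A)) < ε) →
      ∃ a : A, z = (a : Unitization ℂ A)) :
    ∀ a : A, (0 : ℂ) ∈ closure (convexHull ℝ (spatialNR (‖·‖) a)) := by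
  intro a
  by_contra h0
  obtain ⟨w, c, hc, hsep⟩ := exists_pos_le_re_mul_of_zero_notMem_closure_convexHull h0
  have hb : ∀ z ∈ spatialNR (‖·‖) (w • a), c ≤ z.re := by
    rw [spatialNR_smul]
    rintro _ ⟨z, hz, rfl⟩
    exact hsep z hz
  obtain ⟨t, ρ, hρ0, hρ1, hcontr⟩ := exists_norm_sub_smul_mul_le hc hb
  set z : Unitization ℂ A := 1 + ((-(t : ℂ) • (w • a) : A) : Unitization ℂ A)
  have hz : ∀ x, ‖leftRegular z x‖ ≤ ρ * ‖x‖ := fun x => by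
    simpa [z, leftRegular_apply, smul_mul_assoc, add_comm, ← sub_eq_add_neg] using hcontr x
  obtain ⟨a₀, ha₀⟩ := hclosed 1 (exists_opU_one_sub_lt (by simp [z]) hρ0 hρ1 hz)
  simpa using congrArg (·.fst) ha₀

/-- If `(A, ‖·‖)` is a non-unital normed algebra with regular norm and `A` is closed in
the unitization `(A_e, ‖·‖_op)`, then `0 ∈ closure (convexHull (V_A a))` for all `a`. -/
theorem zero_mem_numericalRange_of_closed
    (A : Type*) [NonUnitalNormedRing A] [NormedSpace ℂ A]
    [IsScalarTower ℂ A A] [SMulCommClass ℂ A A]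
    (hA : ¬ ∃ e : A, ∀ x : A, e * x = x ∧ x * e = x)
    (hreg : ∀ a : A, ‖a‖ = sSup {r : ℝ | ∃ x : A, ‖x‖ ≤ 1 ∧ r = ‖a * x‖})
    (hclosed : ∀ z : Unitization ℂ A,
      (∀ ε > (0 : ℝ), ∃ a : A, opU (z - (a : Unitization ℂ A)) < ε) →
      ∃ a : A, z = (a : Unitization ℂ A)) :
    ∀ a : A, (0 : ℂ) ∈ closure (convexHull ℝ (spatialNR (‖·‖) a)) :=
  zero_mem_numericalRange_of_closed_general A hclosed
end

section
/- Let A be a non-unital semisimple Banach algebra with the spectral extension property, and suppose A has the P-property. Then the unitization A_e also has the P-property: every nonzero closed ideal I of A_e contains an element c with r_{pA_e}(c) > 0. -/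
/-- A submultiplicative algebra norm on a (possibly non-unital) complex algebra. -/
structure AlgNorm (A : Type*) [NonUnitalRing A] [Module ℂ A]
    extends RingNorm A where
  smul' : ∀ (c : ℂ) (x : A), toFun (c • x) = ‖c‖ * toFun x

/-- The spectral radius in a non-unital complex algebra, via the quasispectrum. -/
noncomputable def quasiRadius {A : Type*} [NonUnitalRing A] [Module ℂ A]
    [IsScalarTower ℂ A A] [SMulCommClass ℂ A A] (a : A) : ENNReal :=
  ⨆ k ∈ quasispectrum ℂ a, (‖k‖₊ : ENNReal)

/-- The permanent radius of `a`: the infimum of `|a|` over all algebra norms. -/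
noncomputable def permRadius {A : Type*} [NonUnitalRing A] [Module ℂ A]
    (a : A) : ℝ :=
  sInf {r : ℝ | ∃ p : AlgNorm A, r = p.toRingNorm a}

/-! An element `z = s + a` of the unitization annihilating `A` on both sides is zero: if
`s ≠ 0`, then `-s⁻¹ • a` is an identity of `A`, and if `s = 0`, then `a` lies in the left
annihilator of `A`, which semisimplicity rules out. Hence a nonzero closed ideal of the
unitization meets `A` in a nonzero closed ideal. An element of it with positive permanent
radius in `A` keeps that property in the unitization, because every algebra norm on the
unitization restricts to one on `A`, and the `ℓ¹` norm shows that there is at least one. -/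

namespace AlgNorm

variable {A B : Type*} [NonUnitalRing A] [Module ℂ A] [NonUnitalRing B] [Module ℂ B]

def comap {F : Type*} [FunLike F A B] [NonUnitalAlgHomClass F ℂ A B] (f : F)
    (hf : Function.Injective f) (p : AlgNorm B) : AlgNorm A where
  toFun a := p.toRingNorm (f a)
  map_zero' := by simp
  add_le' x y := by simpa only [map_add] using map_add_le_add p.toRingNorm (f x) (f y)
  neg' x := by simpa only [map_neg] using map_neg_eq_map p.toRingNorm (f x)
  mul_le' x y := by simpa only [map_mul] using map_mul_le_mul p.toRingNorm (f x) (f y)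
  eq_zero_of_map_eq_zero' x h := hf (by simpa using p.eq_zero_of_map_eq_zero' (f x) h)
  smul' c x := by rw [map_smul]; exact p.smul' c (f x)

noncomputable def ofNorm (B : Type*) [NonUnitalNormedRing B] [NormedSpace ℂ B] : AlgNorm B where
  toFun := norm
  map_zero' := norm_zero
  add_le' := norm_add_le
  neg' := norm_neg
  mul_le' := norm_mul_le
  eq_zero_of_map_eq_zero' _ := norm_eq_zero.mp
  smul' := norm_smul

end AlgNorm

lemma permRadius_le_permRadius_map {A B : Type*} [NonUnitalRing A] [Module ℂ A]
    [NonUnitalRing B] [Module ℂ B] [Nonempty (AlgNorm B)] {F : Type*} [FunLike F A B]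
    [NonUnitalAlgHomClass F ℂ A B] (f : F) (hf : Function.Injective f) (a : A) :
    permRadius a ≤ permRadius (f a) := by
  obtain ⟨p₀⟩ := ‹Nonempty (AlgNorm B)›
  refine le_csInf ⟨_, p₀, rfl⟩ ?_
  rintro _ ⟨p, rfl⟩
  exact csInf_le ⟨0, by rintro _ ⟨q, rfl⟩; exact apply_nonneg _ _⟩ ⟨p.comap f hf, rfl⟩

lemma quasiRadius_zero {A : Type*} [NonUnitalRing A] [Module ℂ A]
    [IsScalarTower ℂ A A] [SMulCommClass ℂ A A] : quasiRadius (0 : A) = 0 := by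
  simp [quasiRadius, Unitization.quasispectrum_eq_spectrum_inr, spectrum.zero_eq]

namespace Unitization

variable {𝕜 A : Type*} [Field 𝕜] [NonUnitalRing A] [Module 𝕜 A]

lemma inr_mul_eq_inr (x : A) (z : Unitization 𝕜 A) :
    (x : Unitization 𝕜 A) * z = ↑(z.fst • x + x * z.snd) := by
  ext <;> simp

lemma mul_inr_eq_inr (z : Unitization 𝕜 A) (x : A) :
    z * (x : Unitization 𝕜 A) = ↑(z.fst • x + z.snd * x) := by
  ext <;> simp

lemma eq_zero_of_forall_inr_mul_eq_zero [IsScalarTower 𝕜 A A] [SMulCommClass 𝕜 A A]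
    (hA : ¬ ∃ e : A, ∀ x : A, e * x = x ∧ x * e = x)
    (hann : ∀ a : A, (∀ x : A, x * a = 0) → a = 0) {z : Unitization 𝕜 A}
    (hl : ∀ x : A, (x : Unitization 𝕜 A) * z = 0) (hr : ∀ x : A, z * (x : Unitization 𝕜 A) = 0) :
    z = 0 := by
  have hl' (x : A) : z.fst • x + x * z.snd = 0 :=
    inr_injective (R := 𝕜) (by rw [← inr_mul_eq_inr, hl x, inr_zero])
  have hr' (x : A) : z.fst • x + z.snd * x = 0 :=
    inr_injective (R := 𝕜) (by rw [← mul_inr_eq_inr, hr x, inr_zero])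
  by_cases hs : z.fst = 0
  · have ha : z.snd = 0 := hann _ fun x => by simpa [hs] using hl' x
    ext <;> simp [hs, ha]
  · refine absurd ⟨-z.fst⁻¹ • z.snd, fun x => ⟨?_, ?_⟩⟩ hA
    · rw [smul_mul_assoc, eq_neg_of_add_eq_zero_right (hr' x), smul_neg, smul_smul,
        neg_mul, inv_mul_cancel₀ hs, neg_one_smul, neg_neg]
    · rw [mul_smul_comm, eq_neg_of_add_eq_zero_right (hl' x), smul_neg, smul_smul,
        neg_mul, inv_mul_cancel₀ hs, neg_one_smul, neg_neg]

lemma exists_inr_mem_ne_zero [IsScalarTower 𝕜 A A] [SMulCommClass 𝕜 A A]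
    (hA : ¬ ∃ e : A, ∀ x : A, e * x = x ∧ x * e = x)
    (hann : ∀ a : A, (∀ x : A, x * a = 0) → a = 0) {I : TwoSidedIdeal (Unitization 𝕜 A)}
    {z : Unitization 𝕜 A} (hzI : z ∈ I) (hz : z ≠ 0) :
    ∃ b : A, (b : Unitization 𝕜 A) ∈ I ∧ b ≠ 0 := by
  by_contra! hI
  refine hz (eq_zero_of_forall_inr_mul_eq_zero hA hann (fun x => ?_) (fun x => ?_))
  · have hxz := I.mul_mem_left (x : Unitization 𝕜 A) z hzI
    rw [inr_mul_eq_inr] at hxz ⊢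
    rw [hI _ hxz, inr_zero]
  · have hzx := I.mul_mem_right z (x : Unitization 𝕜 A) hzI
    rw [mul_inr_eq_inr] at hzx ⊢
    rw [hI _ hzx, inr_zero]

end Unitization

instance Unitization.nonempty_algNorm {A : Type*} [NonUnitalNormedRing A] [NormedSpace ℂ A] [IsScalarTower ℂ A A]
    [SMulCommClass ℂ A A] : Nonempty (AlgNorm (Unitization ℂ A)) :=
  let e := (WithLp.unitizationAlgEquiv ℂ (𝕜 := ℂ) (A := A)).symm
  ⟨(AlgNorm.ofNorm _).comap e e.injective⟩

theorem pProperty_unitization_general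
    (A : Type*) [NonUnitalNormedRing A] [NormedSpace ℂ A]
    [IsScalarTower ℂ A A] [SMulCommClass ℂ A A]
    (hA : ¬ ∃ e : A, ∀ x : A, e * x = x ∧ x * e = x)
    (hss : ∀ a : A, (∀ x : A, quasiRadius (x * a) = 0) → a = 0)
    (hP : ∀ I : TwoSidedIdeal A, IsClosed (I : Set A) → (∃ b : A, b ∈ I ∧ b ≠ 0) →
      ∃ a : A, a ∈ I ∧ 0 < permRadius a) :
    ∀ I : TwoSidedIdeal (Unitization ℂ A), IsClosed (I : Set (Unitization ℂ A)) →
      (∃ z : Unitization ℂ A, z ∈ I ∧ z ≠ 0) →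
      ∃ c : Unitization ℂ A, c ∈ I ∧ 0 < permRadius c := by
  rintro I hIc ⟨z, hzI, hz⟩
  let inr := Unitization.inrNonUnitalAlgHom ℂ A
  have hann (a : A) (ha : ∀ x : A, x * a = 0) : a = 0 :=
    hss a fun x => by rw [ha x, quasiRadius_zero]
  -- `Unitization.continuous_inr` needs a regular normed algebra; this uses the product topology.
  have hinr : Continuous inr :=
    Unitization.isUniformEmbedding_addEquiv.isUniformInducing.isInducing.continuous_iff.mpr
      (continuous_const.prodMk continuous_id)
  have hJc : IsClosed (I.comap inr : Set A) := by
    convert hIc.preimage hinr using 1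
    ext; exact TwoSidedIdeal.mem_comap inr
  obtain ⟨b, hbI, hb⟩ := Unitization.exists_inr_mem_ne_zero hA hann hzI hz
  obtain ⟨a, haJ, ha⟩ := hP _ hJc ⟨b, (TwoSidedIdeal.mem_comap inr).mpr hbI, hb⟩
  exact ⟨inr a, (TwoSidedIdeal.mem_comap inr).mp haJ,
    ha.trans_le (permRadius_le_permRadius_map inr Unitization.inr_injective a)⟩

/-- If `A` is a non-unital semisimple Banach algebra with the spectral extension
property and `A` has the P-property, then the unitization `A_e` has the P-property:
every nonzero closed ideal of `A_e` contains an element of strictly positive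
permanent radius. -/
theorem pProperty_unitization
    (A : Type*) [NonUnitalNormedRing A] [NormedSpace ℂ A]
    [IsScalarTower ℂ A A] [SMulCommClass ℂ A A] [CompleteSpace A]
    (hA : ¬ ∃ e : A, ∀ x : A, e * x = x ∧ x * e = x)
    (hss : ∀ a : A, (∀ x : A, quasiRadius (x * a) = 0) → a = 0)
    (hSEP : ∀ p : AlgNorm A, ∀ a : A,
      quasiRadius a ≤ ENNReal.ofReal (p.toRingNorm a))
    (hP : ∀ I : TwoSidedIdeal A, IsClosed (I : Set A) → (∃ b : A, b ∈ I ∧ b ≠ 0) →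
      ∃ a : A, a ∈ I ∧ 0 < permRadius a) :
    ∀ I : TwoSidedIdeal (Unitization ℂ A), IsClosed (I : Set (Unitization ℂ A)) →
      (∃ z : Unitization ℂ A, z ∈ I ∧ z ≠ 0) →
      ∃ c : Unitization ℂ A, c ∈ I ∧ 0 < permRadius c :=
  pProperty_unitization_general A hA hss hP
end
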